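/- Let X and Y be Banach spaces and let f : X → Y be strictly differentiable at x̄ with surjective strict derivative ∇f(x̄). Then there exist a neighborhood V of ȳ := f(x̄) and a continuous function x : V → X with x(ȳ) = x̄ and f(x(y)) = y for all y ∈ V, whose calmness modulus at ȳ satisfies clm x(ȳ) ≤ 2 sup{ d(0, ∇f(x̄)⁻¹(y)) : y ∈ 𝔹 }, where 𝔹 is the closed unit ball of Y and d(0, ∇f(x̄)⁻¹(y)) is the distance from 0 to the preimage of y under ∇f(x̄). -/

import Mathlib

open Metric Filter

/-- The modulus of calmness `clm s(ybar)` of `s : Y → X` at `ybar`: the infimum of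
constants `γ` with `‖s y - s ybar‖ ≤ γ‖y - ybar‖` for all `y` near `ybar`. -/
noncomputable def clmModulus {X Y : Type*} [NormedAddCommGroup X] [NormedAddCommGroup Y]
    (s : Y → X) (ybar : Y) : ENNReal :=
  ⨅ (γ : NNReal) (_ : ∃ ε > (0 : ℝ), ∀ y ∈ ball ybar ε,
      ‖s y - s ybar‖ ≤ (γ : ℝ) * ‖y - ybar‖), (γ : ENNReal)

/-!
The open mapping theorem makes `K := sup_{‖y‖ ≤ 1} d(0, B⁻¹ y)` finite, so every `y` has a
`B`-preimage of norm at most `a ‖y‖` for any `a > K`. Such a preimage stays admissible for all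
points near `y`, so a partition of unity on `Y \ {0}` (Michael's selection argument) glues these
preimages into a continuous `σ` with `‖B (σ z) - z‖ ≤ δ ‖z‖` and `‖σ z‖ ≤ b ‖z‖`, `b` slightly above
`a`. In Newton's method with `σ` in place of `B⁻¹`, `x_{n+1} = x_n + σ (y - f x_n)`, the residuals
contract by `θ = δ + c b < 1`, where `c` bounds the deviation of `f` from `B` near `x̄`. The
increments are dominated by a geometric series uniformly in `y`, so the limit `s y` depends
continuously on `y`, solves `f (s y) = y`, and `‖s y - x̄‖ ≤ b / (1 - θ) ‖y - ȳ‖`. With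
`a = 5K/4`, `b = 3K/2`, `δ = 1/8` and `θ = 1/4` this constant is `2K`.
-/

open Set Topology
open scoped NNReal ENNReal

section

variable {X Y : Type*} [NormedAddCommGroup X] [NormedAddCommGroup Y]

theorem clmModulus_le {s : Y → X} {ybar : Y} {γ : ℝ≥0}
    (h : ∀ᶠ y in 𝓝 ybar, ‖s y - s ybar‖ ≤ γ * ‖y - ybar‖) : clmModulus s ybar ≤ γ := by
  obtain ⟨ε, hε, hball⟩ := Metric.eventually_nhds_iff_ball.1 h
  exact iInf₂_le γ ⟨ε, hε, hball⟩

theorem continuous_of_continuousOn_compl_zero_of_norm_le {F : Y → X} {b : ℝ}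
    (hF : ContinuousOn F {0}ᶜ) (hb : ∀ y, ‖F y‖ ≤ b * ‖y‖) : Continuous F := by
  refine continuous_iff_continuousAt.2 fun y => ?_
  rcases eq_or_ne y 0 with rfl | hy
  · have hF0 : F 0 = 0 := by simpa using hb 0
    have hlim : Tendsto (fun y : Y => b * ‖y‖) (𝓝 0) (𝓝 0) :=
      (continuous_const.mul continuous_norm).tendsto' 0 0 (by simp)
    rw [ContinuousAt, hF0]
    exact squeeze_zero_norm hb hlim
  · exact hF.continuousAt (isOpen_compl_singleton.mem_nhds hy)

variable [NormedSpace ℝ X] [NormedSpace ℝ Y]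

namespace ContinuousLinearMap

/-- The inner norm `‖B⁻¹‖⁻ = sup_{‖y‖ ≤ 1} d(0, B⁻¹ y)` of the set-valued inverse of `B`. -/
noncomputable def inverseInnerNorm (B : X →L[ℝ] Y) : ℝ≥0∞ :=
  ⨆ y ∈ closedBall (0 : Y) 1, infEDist (0 : X) (B ⁻¹' {y})

variable (B : X →L[ℝ] Y)

theorem inverseInnerNorm_ne_top [CompleteSpace X] [CompleteSpace Y]
    (hB : Function.Surjective B) : B.inverseInnerNorm ≠ ∞ := by
  obtain ⟨C, hC0, hC⟩ := B.exists_preimage_norm_le hB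
  refine ne_top_of_le_ne_top (ENNReal.ofReal_ne_top (r := C)) (iSup₂_le fun y hy => ?_)
  obtain ⟨x, rfl, hx⟩ := hC y
  calc infEDist 0 (B ⁻¹' {B x}) ≤ edist 0 x := infEDist_le_edist_of_mem rfl
    _ = ENNReal.ofReal ‖x‖ := by rw [edist_comm, edist_zero_right, ofReal_norm]
    _ ≤ ENNReal.ofReal C := by
      gcongr
      simpa using hx.trans (mul_le_of_le_one_right hC0.le (mem_closedBall_zero_iff.1 hy))

theorem inverseInnerNorm_pos [Nontrivial Y] : 0 < B.inverseInnerNorm := by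
  obtain ⟨y, hy⟩ := exists_norm_eq Y zero_le_one
  have hy0 : (0 : X) ∉ B ⁻¹' {y} := by
    simp [eq_comm, ← norm_eq_zero, hy]
  have hclosed : IsClosed (B ⁻¹' {y}) := isClosed_singleton.preimage B.continuous
  calc 0 < infEDist (0 : X) (B ⁻¹' {y}) :=
        pos_iff_ne_zero.2 fun h => hy0 ((mem_iff_infEDist_zero_of_closed hclosed).2 h)
    _ ≤ B.inverseInnerNorm := le_iSup₂ (f := fun y _ => infEDist (0 : X) (B ⁻¹' {y})) y
        (mem_closedBall_zero_iff.2 hy.le)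

theorem exists_preimage_norm_le_of_inverseInnerNorm_lt {a : ℝ≥0}
    (h : B.inverseInnerNorm < a) (y : Y) : ∃ x, B x = y ∧ ‖x‖ ≤ a * ‖y‖ := by
  rcases eq_or_ne y 0 with rfl | hy
  · exact ⟨0, map_zero B, by simp⟩
  have hny : ‖y‖ ≠ 0 := norm_ne_zero_iff.2 hy
  have hunit : ‖y‖⁻¹ • y ∈ closedBall (0 : Y) 1 := by
    rw [mem_closedBall_zero_iff, norm_smul, norm_inv, norm_norm, inv_mul_cancel₀ hny]
  have hlt : infEDist (0 : X) (B ⁻¹' {‖y‖⁻¹ • y}) < a :=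
    (le_iSup₂ (f := fun y _ => infEDist (0 : X) (B ⁻¹' {y})) _ hunit).trans_lt h
  obtain ⟨x, hx, hxa⟩ := infEDist_lt_iff.1 hlt
  rw [edist_comm, edist_zero_right] at hxa
  replace hxa : ‖x‖ < a := by simpa [enorm, ← NNReal.coe_lt_coe] using hxa
  refine ⟨‖y‖ • x, ?_, ?_⟩
  · rw [map_smul, hx, smul_smul, mul_inv_cancel₀ hny, one_smul]
  · rw [norm_smul, norm_norm, mul_comm (a : ℝ)]
    exact mul_le_mul_of_nonneg_left hxa.le (norm_nonneg y)

end ContinuousLinearMap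

structure IsApproxRightInverse (B : X →L[ℝ] Y) (σ : Y → X) (δ b : ℝ≥0) : Prop where
  norm_apply_sub_le : ∀ z, ‖B (σ z) - z‖ ≤ δ * ‖z‖
  norm_le : ∀ z, ‖σ z‖ ≤ b * ‖z‖

variable {B : X →L[ℝ] Y}

theorem IsApproxRightInverse.map_zero {σ : Y → X} {δ b : ℝ≥0}
    (hσ : IsApproxRightInverse B σ δ b) : σ 0 = 0 := by
  simpa using hσ.norm_le 0

theorem eventually_norm_apply_sub_le_and_norm_le {a b δ : ℝ} (hab : a < b) (hδ : 0 < δ)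
    {x : X} {z : Y} (hz : z ≠ 0) (hx : B x = z) (hxa : ‖x‖ ≤ a * ‖z‖) :
    ∀ᶠ w in 𝓝 z, ‖B x - w‖ ≤ δ * ‖w‖ ∧ ‖x‖ ≤ b * ‖w‖ := by
  have hz : 0 < ‖z‖ := norm_pos_iff.2 hz
  have hres : ∀ᶠ w in 𝓝 z, ‖B x - w‖ < δ * ‖w‖ :=
    (continuous_const.sub continuous_id).norm.continuousAt.eventually_lt
      (continuous_const.mul continuous_norm).continuousAt
      (by simpa [hx] using mul_pos hδ hz)
  have hnorm : ∀ᶠ w in 𝓝 z, ‖x‖ < b * ‖w‖ :=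
    continuousAt_const.eventually_lt (continuous_const.mul continuous_norm).continuousAt
      (hxa.trans_lt (mul_lt_mul_of_pos_right hab hz))
  filter_upwards [hres, hnorm] with w h₁ h₂ using ⟨h₁.le, h₂.le⟩

theorem exists_continuous_isApproxRightInverse {a : ℝ} {b δ : ℝ≥0} (hab : a < b) (hδ : 0 < δ)
    (H : ∀ y, ∃ x, B x = y ∧ ‖x‖ ≤ a * ‖y‖) :
    ∃ σ : Y → X, Continuous σ ∧ IsApproxRightInverse B σ δ b := by
  classical
  -- Only on `Y \ {0}`: no single point is admissible for all `w` near `0`.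
  let t : ({0}ᶜ : Set Y) → Set X := fun z =>
    B ⁻¹' closedBall (z : Y) (δ * ‖(z : Y)‖) ∩ closedBall 0 (b * ‖(z : Y)‖)
  have hconv : ∀ z, Convex ℝ (t z) := fun z =>
    ((convex_closedBall _ _).linear_preimage (B : X →ₗ[ℝ] Y)).inter (convex_closedBall _ _)
  have hloc : ∀ z, ∃ x, ∀ᶠ w in 𝓝 z, x ∈ t w := fun z => by
    obtain ⟨x, hx, hxa⟩ := H z
    refine ⟨x, (continuous_subtype_val.tendsto z).eventually
      (eventually_norm_apply_sub_le_and_norm_le hab (NNReal.coe_pos.2 hδ) z.2 hx hxa)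
        |>.mono fun w hw => ?_⟩
    simpa [t, dist_eq_norm] using hw
  obtain ⟨g, hg⟩ := exists_continuous_forall_mem_convex_of_local_const hconv hloc
  let σ : Y → X := fun y => if h : y = 0 then 0 else g ⟨y, h⟩
  have hσ : IsApproxRightInverse B σ δ b := by
    constructor <;> intro z <;> rcases eq_or_ne z 0 with rfl | hz
    · simp [σ]
    · simpa [σ, hz, t, dist_eq_norm] using (hg ⟨z, hz⟩).1
    · simp [σ]
    · simpa [σ, hz, t] using (hg ⟨z, hz⟩).2
  have hcont : ContinuousOn σ {0}ᶜ := by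
    rw [continuousOn_iff_continuous_domRestrict]
    convert g.continuous using 1
    ext z
    exact dif_neg z.2
  exact ⟨σ, continuous_of_continuousOn_compl_zero_of_norm_le hcont hσ.norm_le, hσ⟩

end

section NewtonIteration

variable {X Y : Type*} [NormedAddCommGroup X] [NormedAddCommGroup Y]

def newtonSeq (f : X → Y) (σ : Y → X) (x₀ : X) (y : Y) : ℕ → X
  | 0 => x₀
  | n + 1 => newtonSeq f σ x₀ y n + σ (y - f (newtonSeq f σ x₀ y n))

noncomputable def newtonLim (f : X → Y) (σ : Y → X) (x₀ : X) (y : Y) : X :=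
  x₀ + ∑' n, σ (y - f (newtonSeq f σ x₀ y n))

variable {f : X → Y} {σ : Y → X} {x₀ : X} {y : Y}

theorem newtonSeq_eq_add_sum (n : ℕ) :
    newtonSeq f σ x₀ y n = x₀ + ∑ i ∈ Finset.range n, σ (y - f (newtonSeq f σ x₀ y i)) := by
  induction n with
  | zero => simp [newtonSeq]
  | succ n ih => rw [Finset.sum_range_succ, ← add_assoc, ← ih, newtonSeq]

theorem newtonLim_apply_self (hσ : σ 0 = 0) : newtonLim f σ x₀ (f x₀) = x₀ := by
  have hconst : ∀ n, newtonSeq f σ x₀ (f x₀) n = x₀ := fun n => by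
    induction n with
    | zero => rfl
    | succ n ih => rw [newtonSeq, ih, sub_self, hσ, add_zero]
  simp [newtonLim, hconst, hσ]

variable [NormedSpace ℝ X] [NormedSpace ℝ Y] {B : X →L[ℝ] Y} {ρ θ : ℝ} {δ b c : ℝ≥0}

theorem ApproximatesLinearOn.norm_sub_apply_add_le {s : Set X}
    (hf : ApproximatesLinearOn f B s c) (hσ : IsApproxRightInverse B σ δ b) {x : X}
    (hx : x ∈ s) (hx' : x + σ (y - f x) ∈ s) :
    ‖y - f (x + σ (y - f x))‖ ≤ (δ + c * b) * ‖y - f x‖ := by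
  set z := y - f x
  have hsplit : y - f (x + σ z) = (z - B (σ z)) - (f (x + σ z) - f x - B (x + σ z - x)) := by
    simp only [z, add_sub_cancel_left]; abel
  calc ‖y - f (x + σ z)‖ ≤ ‖B (σ z) - z‖ + c * ‖x + σ z - x‖ := by
        rw [hsplit]
        refine (norm_sub_le _ _).trans (add_le_add ?_ (hf _ hx' _ hx))
        rw [norm_sub_rev]
    _ ≤ δ * ‖z‖ + c * (b * ‖z‖) := by
        rw [add_sub_cancel_left]
        gcongr
        exacts [hσ.norm_apply_sub_le z, hσ.norm_le z]
    _ = (δ + c * b) * ‖z‖ := by ring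

theorem ApproximatesLinearOn.newtonSeq_mem_closedBall_and_norm_sub_le
    (hf : ApproximatesLinearOn f B (closedBall x₀ ρ) c) (hσ : IsApproxRightInverse B σ δ b)
    (hθ : δ + c * b ≤ θ) (hθ₁ : θ < 1) (hy : b * ‖y - f x₀‖ ≤ (1 - θ) * ρ)
    (n : ℕ) :
    newtonSeq f σ x₀ y n ∈ closedBall x₀ ρ ∧
      ‖y - f (newtonSeq f σ x₀ y n)‖ ≤ θ ^ n * ‖y - f x₀‖ := by
  set d := ‖y - f x₀‖
  have hd : 0 ≤ d := norm_nonneg _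
  have hθ₀ : 0 ≤ θ := le_trans (by positivity) hθ
  have hmem : ∀ x m, (1 - θ) * ‖x - x₀‖ ≤ b * (1 - θ ^ m) * d → x ∈ closedBall x₀ ρ := by
    intro x m hx
    have : b * (1 - θ ^ m) * d ≤ (1 - θ) * ρ := by
      nlinarith [mul_nonneg (mul_nonneg b.coe_nonneg (pow_nonneg hθ₀ m)) hd]
    rw [mem_closedBall, dist_eq_norm]
    exact le_of_mul_le_mul_left (hx.trans this) (sub_pos.2 hθ₁)
  -- `(1 - θ)` times the partial sum `b * d * (1 + θ + ⋯ + θ ^ (n - 1))` of the step bounds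
  suffices ∀ n, ‖y - f (newtonSeq f σ x₀ y n)‖ ≤ θ ^ n * d ∧
      (1 - θ) * ‖newtonSeq f σ x₀ y n - x₀‖ ≤ b * (1 - θ ^ n) * d from
    ⟨hmem _ n (this n).2, (this n).1⟩
  intro n
  induction n with
  | zero => simp [newtonSeq, d]
  | succ n ih =>
    obtain ⟨hres, hdist⟩ := ih
    set u := newtonSeq f σ x₀ y n
    have hstep : ‖σ (y - f u)‖ ≤ b * (θ ^ n * d) :=
      (hσ.norm_le _).trans (by gcongr)
    have hdist' : (1 - θ) * ‖u + σ (y - f u) - x₀‖ ≤ b * (1 - θ ^ (n + 1)) * d := calc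
      (1 - θ) * ‖u + σ (y - f u) - x₀‖ ≤ (1 - θ) * (‖u - x₀‖ + ‖σ (y - f u)‖) := by
        rw [add_sub_right_comm]
        exact mul_le_mul_of_nonneg_left (norm_add_le _ _) (by linarith)
      _ ≤ b * (1 - θ ^ n) * d + (1 - θ) * (b * (θ ^ n * d)) := by nlinarith
      _ = b * (1 - θ ^ (n + 1)) * d := by ring
    refine ⟨?_, hdist'⟩
    calc ‖y - f (u + σ (y - f u))‖ ≤ (δ + c * b) * ‖y - f u‖ :=
          hf.norm_sub_apply_add_le hσ (hmem u n hdist) (hmem _ (n + 1) hdist')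
      _ ≤ θ * (θ ^ n * d) := mul_le_mul hθ hres (norm_nonneg _) hθ₀
      _ = θ ^ (n + 1) * d := by ring

theorem ApproximatesLinearOn.norm_newtonSeq_step_le
    (hf : ApproximatesLinearOn f B (closedBall x₀ ρ) c) (hσ : IsApproxRightInverse B σ δ b)
    (hθ : δ + c * b ≤ θ) (hθ₁ : θ < 1) (hy : b * ‖y - f x₀‖ ≤ (1 - θ) * ρ) (n : ℕ) :
    ‖σ (y - f (newtonSeq f σ x₀ y n))‖ ≤ b * ‖y - f x₀‖ * θ ^ n :=
  (hσ.norm_le _).trans <| by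
    rw [mul_assoc, mul_comm _ (θ ^ n)]
    gcongr
    exact (hf.newtonSeq_mem_closedBall_and_norm_sub_le hσ hθ hθ₁ hy n).2

theorem ApproximatesLinearOn.apply_newtonLim_and_norm_newtonLim_sub_le [CompleteSpace X]
    (hf : ApproximatesLinearOn f B (closedBall x₀ ρ) c) (hσ : IsApproxRightInverse B σ δ b)
    (hθ : δ + c * b ≤ θ) (hθ₁ : θ < 1) (hy : b * ‖y - f x₀‖ ≤ (1 - θ) * ρ) :
    f (newtonLim f σ x₀ y) = y ∧ ‖newtonLim f σ x₀ y - x₀‖ ≤ b / (1 - θ) * ‖y - f x₀‖ := by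
  have hθ₀ : 0 ≤ θ := le_trans (by positivity) hθ
  have hbounds := hf.newtonSeq_mem_closedBall_and_norm_sub_le hσ hθ hθ₁ hy
  have hstep := hf.norm_newtonSeq_step_le hσ hθ hθ₁ hy
  have hgeom : HasSum (fun n => b * ‖y - f x₀‖ * θ ^ n) (b * ‖y - f x₀‖ * (1 - θ)⁻¹) :=
    (hasSum_geometric_of_lt_one hθ₀ hθ₁).mul_left _
  have hsum : HasSum (fun n => σ (y - f (newtonSeq f σ x₀ y n))) (newtonLim f σ x₀ y - x₀) := by
    rw [newtonLim, add_sub_cancel_left]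
    exact (Summable.of_norm_bounded hgeom.summable hstep).hasSum
  have hlim : Tendsto (newtonSeq f σ x₀ y) atTop (𝓝 (newtonLim f σ x₀ y)) := by
    have hpartial := hsum.tendsto_sum_nat.const_add x₀
    rw [add_sub_cancel] at hpartial
    exact hpartial.congr fun n => (newtonSeq_eq_add_sum n).symm
  have hmem : newtonLim f σ x₀ y ∈ closedBall x₀ ρ :=
    isClosed_closedBall.mem_of_tendsto hlim (Eventually.of_forall fun n => (hbounds n).1)
  constructor
  · have hres : Tendsto (fun n => y - f (newtonSeq f σ x₀ y n)) atTop (𝓝 0) :=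
      squeeze_zero_norm (fun n => (hbounds n).2) <| by
        simpa using (tendsto_pow_atTop_nhds_zero_of_lt_one hθ₀ hθ₁).mul_const ‖y - f x₀‖
    have hfu : Tendsto (fun n => f (newtonSeq f σ x₀ y n)) atTop (𝓝 (f (newtonLim f σ x₀ y))) :=
      (hf.continuousOn _ hmem).tendsto.comp
        (tendsto_nhdsWithin_iff.2 ⟨hlim, Eventually.of_forall fun n => (hbounds n).1⟩)
    refine tendsto_nhds_unique hfu ?_
    simpa using hres.const_sub y
  · rw [← hsum.tsum_eq]
    calc ‖∑' n, σ (y - f (newtonSeq f σ x₀ y n))‖ ≤ b * ‖y - f x₀‖ * (1 - θ)⁻¹ :=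
          tsum_of_norm_bounded hgeom hstep
      _ = b / (1 - θ) * ‖y - f x₀‖ := by ring

theorem ApproximatesLinearOn.continuousOn_newtonSeq
    (hf : ApproximatesLinearOn f B (closedBall x₀ ρ) c) (hσ : IsApproxRightInverse B σ δ b)
    (hσc : Continuous σ) (hθ : δ + c * b ≤ θ) (hθ₁ : θ < 1) (n : ℕ) :
    ContinuousOn (fun y => newtonSeq f σ x₀ y n) {y | b * ‖y - f x₀‖ ≤ (1 - θ) * ρ} := by
  induction n with
  | zero => exact continuousOn_const
  | succ n ih =>
    have hmaps : MapsTo (fun y => newtonSeq f σ x₀ y n) {y | b * ‖y - f x₀‖ ≤ (1 - θ) * ρ}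
        (closedBall x₀ ρ) := fun y hy =>
      (hf.newtonSeq_mem_closedBall_and_norm_sub_le hσ hθ hθ₁ hy n).1
    exact ih.add (hσc.comp_continuousOn (continuousOn_id.sub (hf.continuousOn.comp ih hmaps)))

theorem ApproximatesLinearOn.continuousOn_newtonLim [CompleteSpace X]
    (hf : ApproximatesLinearOn f B (closedBall x₀ ρ) c) (hσ : IsApproxRightInverse B σ δ b)
    (hσc : Continuous σ) (hθ : δ + c * b ≤ θ) (hθ₁ : θ < 1) :
    ContinuousOn (newtonLim f σ x₀) {y | b * ‖y - f x₀‖ ≤ (1 - θ) * ρ} := by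
  have hθ₀ : 0 ≤ θ := le_trans (by positivity) hθ
  have hterm : ∀ n, ContinuousOn (fun y => σ (y - f (newtonSeq f σ x₀ y n)))
      {y | b * ‖y - f x₀‖ ≤ (1 - θ) * ρ} := fun n =>
    ((hf.continuousOn_newtonSeq hσ hσc hθ hθ₁ (n + 1)).sub
      (hf.continuousOn_newtonSeq hσ hσc hθ hθ₁ n)).congr fun y _ => by simp [newtonSeq]
  refine continuousOn_const.add <| continuousOn_tsum hterm
    ((summable_geometric_of_lt_one hθ₀ hθ₁).mul_left ((1 - θ) * ρ)) fun n y hy => ?_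
  exact (hf.norm_newtonSeq_step_le hσ hθ hθ₁ hy n).trans
    (mul_le_mul_of_nonneg_right hy (pow_nonneg hθ₀ n))

theorem HasStrictFDerivAt.exists_continuousOn_selection [CompleteSpace X]
    (hf : HasStrictFDerivAt f B x₀) (hσc : Continuous σ) (hσ : IsApproxRightInverse B σ δ b)
    (hδθ : δ < θ) (hθ₁ : θ < 1) :
    ∃ V ∈ 𝓝 (f x₀), ∃ s : Y → X, ContinuousOn s V ∧ s (f x₀) = x₀ ∧
      ∀ y ∈ V, f (s y) = y ∧ ‖s y - x₀‖ ≤ b / (1 - θ) * ‖y - f x₀‖ := by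
  obtain ⟨c, hc, hcb⟩ := exists_pos_mul_lt (sub_pos.2 hδθ) b
  obtain ⟨U, hU, hfU⟩ := hf.approximates_deriv_on_nhds (c := ⟨c, hc.le⟩) (Or.inr hc)
  obtain ⟨ρ, hρ, hρU⟩ := nhds_basis_closedBall.mem_iff.1 hU
  have hfρ := hfU.mono_set hρU
  have hθ : δ + (⟨c, hc.le⟩ : ℝ≥0) * b ≤ θ := by push_cast; linarith
  have hV : {y | b * ‖y - f x₀‖ ≤ (1 - θ) * ρ} ∈ 𝓝 (f x₀) := by
    have : Tendsto (fun y => b * ‖y - f x₀‖) (𝓝 (f x₀)) (𝓝 0) :=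
      (continuous_const.mul (continuous_id.sub continuous_const).norm).tendsto' _ _ (by simp)
    exact (this.eventually_lt_const (mul_pos (sub_pos.2 hθ₁) hρ)).mono fun _ => le_of_lt
  exact ⟨_, hV, newtonLim f σ x₀, hfρ.continuousOn_newtonLim hσ hσc hθ hθ₁,
    newtonLim_apply_self hσ.map_zero,
    fun y hy => hfρ.apply_newtonLim_and_norm_newtonLim_sub_le hσ hθ hθ₁ hy⟩

end NewtonIteration

/-- If `f` is strictly differentiable at `xbar` with surjective strict derivative `B`,
then some continuous local inverse selection `s` of `f` around `ybar := f xbar` exists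
with `s ybar = xbar` and calmness modulus at most
`2 sup { d(0, B⁻¹(y)) : y ∈ 𝔹 }`. -/
theorem continuous_inverse_selection_calmness_bound
    {X Y : Type*} [NormedAddCommGroup X] [NormedSpace ℝ X] [CompleteSpace X]
    [NormedAddCommGroup Y] [NormedSpace ℝ Y] [CompleteSpace Y]
    (f : X → Y) (xbar : X) (B : X →L[ℝ] Y)
    (hf : HasStrictFDerivAt f B xbar) (hsurj : Function.Surjective B) :
    ∃ V ∈ nhds (f xbar), ∃ s : Y → X,
      ContinuousOn s V ∧ s (f xbar) = xbar ∧
      (∀ y ∈ V, f (s y) = y) ∧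
      clmModulus s (f xbar) ≤
        2 * ⨆ y ∈ closedBall (0 : Y) 1, EMetric.infEdist (0 : X) (B ⁻¹' {y}) := by
  rcases subsingleton_or_nontrivial Y with hY | hY
  · exact ⟨univ, univ_mem, fun _ => xbar, continuousOn_const, rfl,
      fun y _ => Subsingleton.elim _ _, (clmModulus_le (γ := 0) (by simp)).trans (by simp)⟩
  have hfin := B.inverseInnerNorm_ne_top hsurj
  set κ := B.inverseInnerNorm.toNNReal
  have hκ : (κ : ℝ≥0∞) = B.inverseInnerNorm := ENNReal.coe_toNNReal hfin
  have hκ₀ : 0 < κ := ENNReal.toNNReal_pos B.inverseInnerNorm_pos.ne' hfin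
  have hpre := B.exists_preimage_norm_le_of_inverseInnerNorm_lt (a := 5 / 4 * κ)
    (hκ ▸ ENNReal.coe_lt_coe.2 (lt_mul_left hκ₀ (by norm_num)))
  obtain ⟨σ, hσc, hσ⟩ := exists_continuous_isApproxRightInverse (b := 3 / 2 * κ) (δ := 1 / 8)
    (NNReal.coe_lt_coe.2 (mul_lt_mul_of_pos_right (by norm_num) hκ₀)) (by norm_num) hpre
  obtain ⟨V, hV, s, hsc, hs₀, hs⟩ :=
    hf.exists_continuousOn_selection (θ := 1 / 4) hσc hσ (by norm_num) (by norm_num)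
  refine ⟨V, hV, s, hsc, hs₀, fun y hy => (hs y hy).1, ?_⟩
  calc clmModulus s (f xbar) ≤ (2 * κ : ℝ≥0) :=
        clmModulus_le <| eventually_of_mem hV fun y hy => by
          rw [hs₀]
          exact (hs y hy).2.trans_eq (by push_cast; ring)
    _ = 2 * B.inverseInnerNorm := by rw [ENNReal.coe_mul, hκ]; rfl
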